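/- Let A ∈ ℝ^{m×n}, let Θ ∈ ℝ^{n×n} be a diagonal matrix with strictly positive diagonal entries, let M = [[−Θ^{-1}, Aᵀ],[A, 0]] and E = [[0, 0],[0, δ I_m]] with δ > 0 (so ‖E‖ = δ). Fix an index i and let λᵢ be the i-th smallest eigenvalue of M; assume |λᵢ| > 2δ. For any t ∈ [0,1], let λᵢ(t) denote the i-th smallest eigenvalue of M + tE and let x(t) = (x₁(t), x₂(t)) be any unit eigenvector of M + tE associated with λᵢ(t). Then ‖x₂(t)‖ ≤ ‖A‖ / √((|λᵢ| − 2δ)² + ‖A‖²). -/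

import Mathlib

open Matrix

/-!
Since `tE` is positive semidefinite with `y ⬝ (tE) y ≤ tδ ‖y‖²`, Weyl's monotonicity principle
(proved by the Courant–Fischer dimension count) gives `λᵢ ≤ λᵢ(t) ≤ λᵢ + tδ`. The second block
row of the eigen-equation reads `A x₁ = (λᵢ(t) − tδ) x₂`, and `|λᵢ(t) − tδ| ≥ |λᵢ| − δ`, so
`(|λᵢ| − 2δ) ‖x₂‖ ≤ ‖A‖ ‖x₁‖` with `|λᵢ| − 2δ > 0`. Together with `‖x₁‖² + ‖x₂‖² = 1` this
bounds `‖x₂‖`.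
-/

/-- Euclidean norm of a real vector. -/
noncomputable def euclidNorm {ι : Type*} [Fintype ι] (x : ι → ℝ) : ℝ :=
  Real.sqrt (∑ i, (x i) ^ 2)

/-- Spectral norm (largest singular value) of a real matrix. -/
noncomputable def specNorm {m n : ℕ} (A : Matrix (Fin m) (Fin n) ℝ) : ℝ :=
  Real.sqrt (⨆ i, (Matrix.isHermitian_mul_conjTranspose_self A).eigenvalues i)

/-- Sorted (nondecreasing) list of eigenvalues of a Hermitian matrix, with multiplicity. -/
noncomputable def sortedEigs {ι : Type*} [Fintype ι] [DecidableEq ι]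
    {M : Matrix ι ι ℝ} (hM : M.IsHermitian) : List ℝ :=
  (Finset.univ.val.map hM.eigenvalues).sort (· ≤ ·)

/-- The i-th smallest eigenvalue (counted with multiplicity). -/
noncomputable def ithEig {ι : Type*} [Fintype ι] [DecidableEq ι]
    {M : Matrix ι ι ℝ} (hM : M.IsHermitian) (i : ℕ)
    (hi : i < Fintype.card ι) : ℝ :=
  (sortedEigs hM).get ⟨i, by simpa [sortedEigs] using hi⟩

section SortedEigenvalues

variable {ι : Type*} [Fintype ι] [DecidableEq ι]

theorem ithEig_mono {M : Matrix ι ι ℝ} (hM : M.IsHermitian) {k l : ℕ}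
    (hk : k < Fintype.card ι) (hl : l < Fintype.card ι) (hkl : k ≤ l) :
    ithEig hM k hk ≤ ithEig hM l hl :=
  (Multiset.pairwise_sort _ _).rel_get_of_le (a := ⟨k, _⟩) (b := ⟨l, _⟩) hkl

theorem exists_equiv_ithEig_eq_eigenvalues {M : Matrix ι ι ℝ} (hM : M.IsHermitian) :
    ∃ g : Fin (Fintype.card ι) ≃ ι,
      ∀ k : Fin (Fintype.card ι), ithEig hM k k.2 = hM.eigenvalues (g k) := by
  let e : Fin (Fintype.card ι) ≃ ι := (Fintype.equivFin ι).symm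
  let σ := Tuple.sort (hM.eigenvalues ∘ e)
  have hsorted : sortedEigs hM = List.ofFn ((hM.eigenvalues ∘ e) ∘ σ) := by
    refine List.Perm.eq_of_pairwise' (r := (· ≤ ·)) (Multiset.pairwise_sort _ _)
      (List.sortedLE_ofFn_iff.mpr (Tuple.monotone_sort _)).pairwise ?_
    rw [← Multiset.coe_eq_coe, sortedEigs, Multiset.sort_eq, ← Fin.univ_val_map,
      ← Multiset.map_map, ← Multiset.map_map, Multiset.map_univ_val_equiv,
      Multiset.map_univ_val_equiv]
  refine ⟨σ.trans e, fun k => ?_⟩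
  simp only [ithEig, List.get_of_eq hsorted, List.get_ofFn]
  rfl

end SortedEigenvalues

section Rayleigh

variable {ι κ : Type*} [Fintype ι] [Fintype κ]

theorem OrthonormalBasis.repr_eq_zero_of_mem_span (w : OrthonormalBasis κ ℝ (EuclideanSpace ℝ ι))
    {S : Set κ} {x : EuclideanSpace ℝ ι} (hx : x ∈ Submodule.span ℝ (w '' S)) {k : κ}
    (hk : k ∉ S) : w.repr x k = 0 := by
  rw [w.repr_apply_apply]
  induction hx using Submodule.span_induction with
  | mem y hy =>
    obtain ⟨j, hj, rfl⟩ := hy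
    exact w.orthonormal.2 (ne_of_mem_of_not_mem hj hk).symm
  | zero => exact inner_zero_right _
  | add y z _ _ hy hz => rw [inner_add_right, hy, hz, add_zero]
  | smul c y _ hy => rw [inner_smul_right, hy, mul_zero]

variable {M : Matrix ι ι ℝ} {w : OrthonormalBasis κ ℝ (EuclideanSpace ℝ ι)} {μ : κ → ℝ}

theorem dotProduct_mulVec_eq_sum_repr (hw : ∀ k, M *ᵥ ⇑(w k) = μ k • ⇑(w k))
    (x : EuclideanSpace ℝ ι) : ⇑x ⬝ᵥ (M *ᵥ ⇑x) = ∑ k, μ k * w.repr x k ^ 2 := by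
  have hx : ⇑x = ∑ k, w.repr x k • ⇑(w k) := by
    simpa only [WithLp.ofLp_sum, WithLp.ofLp_smul] using congrArg WithLp.ofLp (w.sum_repr x).symm
  have hcoeff : ∀ k, ⇑x ⬝ᵥ ⇑(w k) = w.repr x k := fun k => by
    rw [w.repr_apply_apply, EuclideanSpace.inner_eq_star_dotProduct, star_trivial, dotProduct_comm]
  conv_lhs => arg 2; rw [hx]
  simp only [mulVec_sum, mulVec_smul, hw, dotProduct_sum, dotProduct_smul, smul_smul, hcoeff,
    smul_eq_mul]
  exact Finset.sum_congr rfl fun k _ => by ring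

variable (w) in
theorem dotProduct_self_eq_sum_repr (x : EuclideanSpace ℝ ι) : ⇑x ⬝ᵥ ⇑x = ∑ k, w.repr x k ^ 2 := by
  classical
  simpa using dotProduct_mulVec_eq_sum_repr (M := 1) (μ := 1) (w := w) (fun k => by simp) x

theorem dotProduct_mulVec_le_of_mem_span (hw : ∀ k, M *ᵥ ⇑(w k) = μ k • ⇑(w k)) {S : Set κ}
    {c : ℝ} (hμ : ∀ k ∈ S, μ k ≤ c) {x : EuclideanSpace ℝ ι}
    (hx : x ∈ Submodule.span ℝ (w '' S)) : ⇑x ⬝ᵥ (M *ᵥ ⇑x) ≤ c * (⇑x ⬝ᵥ ⇑x) := by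
  rw [dotProduct_mulVec_eq_sum_repr hw, dotProduct_self_eq_sum_repr w, Finset.mul_sum]
  refine Finset.sum_le_sum fun k _ => ?_
  by_cases hk : k ∈ S
  · exact mul_le_mul_of_nonneg_right (hμ k hk) (sq_nonneg _)
  · simp [w.repr_eq_zero_of_mem_span hx hk]

theorem le_dotProduct_mulVec_of_mem_span (hw : ∀ k, M *ᵥ ⇑(w k) = μ k • ⇑(w k)) {S : Set κ}
    {c : ℝ} (hμ : ∀ k ∈ S, c ≤ μ k) {x : EuclideanSpace ℝ ι}
    (hx : x ∈ Submodule.span ℝ (w '' S)) : c * (⇑x ⬝ᵥ ⇑x) ≤ ⇑x ⬝ᵥ (M *ᵥ ⇑x) := by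
  have h := dotProduct_mulVec_le_of_mem_span (M := -M) (μ := -μ) (c := -c)
    (fun k => by rw [neg_mulVec, hw, Pi.neg_apply, neg_smul]) (fun k hk => neg_le_neg (hμ k hk)) hx
  rwa [neg_mulVec, dotProduct_neg, neg_mul, neg_le_neg_iff] at h

end Rayleigh

theorem finrank_span_image_finset {E κ : Type*} [NormedAddCommGroup E] [InnerProductSpace ℝ E]
    {v : κ → E} (hv : Orthonormal ℝ v) (S : Finset κ) :
    Module.finrank ℝ (Submodule.span ℝ (v '' S)) = S.card := by
  rw [Set.image_eq_range]
  exact (finrank_span_eq_card (hv.comp _ Subtype.val_injective).linearIndependent).trans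
    (Fintype.card_coe S)

theorem exists_ne_zero_mem_span_Iic_mem_span_Ici {E : Type*} [NormedAddCommGroup E]
    [InnerProductSpace ℝ E] {N : ℕ} (v w : OrthonormalBasis (Fin N) ℝ E) (i : Fin N) :
    ∃ x ≠ 0, x ∈ Submodule.span ℝ (v '' Finset.Iic i) ∧
      x ∈ Submodule.span ℝ (w '' Finset.Ici i) := by
  set V := Submodule.span ℝ (v '' Finset.Iic i)
  set W := Submodule.span ℝ (w '' Finset.Ici i)
  have hV : Module.finrank ℝ V = i + 1 := by
    rw [finrank_span_image_finset v.orthonormal, Fin.card_Iic]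
  have hW : Module.finrank ℝ W = N - i := by
    rw [finrank_span_image_finset w.orthonormal, Fin.card_Ici]
  have := Module.Finite.of_basis v.toBasis
  have hVW : Module.finrank ℝ ↥(V ⊔ W) ≤ N :=
    (Submodule.finrank_le _).trans (by simpa using (Module.finrank_eq_card_basis v.toBasis).le)
  have hinf : V ⊓ W ≠ ⊥ := by
    intro hbot
    have := Submodule.finrank_sup_add_finrank_inf_eq V W
    rw [hbot, finrank_bot] at this
    omega
  obtain ⟨x, hx, hx0⟩ := (Submodule.ne_bot_iff _).mp hinf
  exact ⟨x, hx0, Submodule.mem_inf.mp hx⟩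

section Weyl

variable {ι : Type*} [Fintype ι] [DecidableEq ι] {M : Matrix ι ι ℝ}

theorem exists_orthonormalBasis_mulVec_eq_ithEig_smul (hM : M.IsHermitian) :
    ∃ w : OrthonormalBasis (Fin (Fintype.card ι)) ℝ (EuclideanSpace ℝ ι),
      ∀ k : Fin (Fintype.card ι), M *ᵥ ⇑(w k) = ithEig hM k k.2 • ⇑(w k) := by
  obtain ⟨g, hg⟩ := exists_equiv_ithEig_eq_eigenvalues hM
  refine ⟨hM.eigenvectorBasis.reindex g.symm, fun k => ?_⟩
  rw [OrthonormalBasis.reindex_apply, Equiv.symm_symm, hg]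
  exact hM.mulVec_eigenvectorBasis (g k)

theorem ithEig_le_add_of_dotProduct_mulVec_le {A B : Matrix ι ι ℝ} (hA : A.IsHermitian)
    (hB : B.IsHermitian) {b : ℝ} (hAB : ∀ y, y ⬝ᵥ (B *ᵥ y) ≤ y ⬝ᵥ (A *ᵥ y) + b * (y ⬝ᵥ y))
    (i : ℕ) (hi : i < Fintype.card ι) : ithEig hB i hi ≤ ithEig hA i hi + b := by
  obtain ⟨v, hv⟩ := exists_orthonormalBasis_mulVec_eq_ithEig_smul hA
  obtain ⟨w, hw⟩ := exists_orthonormalBasis_mulVec_eq_ithEig_smul hB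
  obtain ⟨x, hx0, hxv, hxw⟩ := exists_ne_zero_mem_span_Iic_mem_span_Ici v w ⟨i, hi⟩
  have hxA : ⇑x ⬝ᵥ (A *ᵥ ⇑x) ≤ ithEig hA i hi * (⇑x ⬝ᵥ ⇑x) :=
    dotProduct_mulVec_le_of_mem_span hv
      (fun k hk => ithEig_mono hA k.2 hi (Fin.le_def.mp (Finset.mem_Iic.mp hk))) hxv
  have hxB : ithEig hB i hi * (⇑x ⬝ᵥ ⇑x) ≤ ⇑x ⬝ᵥ (B *ᵥ ⇑x) :=
    le_dotProduct_mulVec_of_mem_span hw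
      (fun k hk => ithEig_mono hB hi k.2 (Fin.le_def.mp (Finset.mem_Ici.mp hk))) hxw
  have hxx : 0 < ⇑x ⬝ᵥ ⇑x := by
    simpa only [EuclideanSpace.inner_eq_star_dotProduct, star_trivial] using
      real_inner_self_pos.mpr hx0
  refine le_of_mul_le_mul_right ?_ hxx
  linarith [hAB x]

theorem ithEig_le_ithEig_add {A E : Matrix ι ι ℝ} (hA : A.IsHermitian)
    (hAE : (A + E).IsHermitian) (hE : ∀ y, 0 ≤ y ⬝ᵥ (E *ᵥ y)) (i : ℕ)
    (hi : i < Fintype.card ι) : ithEig hA i hi ≤ ithEig hAE i hi := by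
  simpa using ithEig_le_add_of_dotProduct_mulVec_le hAE hA (b := 0)
    (fun y => by simpa [add_mulVec] using hE y) i hi

theorem ithEig_add_le {A E : Matrix ι ι ℝ} (hA : A.IsHermitian) (hAE : (A + E).IsHermitian)
    {c : ℝ} (hE : ∀ y, y ⬝ᵥ (E *ᵥ y) ≤ c * (y ⬝ᵥ y)) (i : ℕ) (hi : i < Fintype.card ι) :
    ithEig hAE i hi ≤ ithEig hA i hi + c :=
  ithEig_le_add_of_dotProduct_mulVec_le hA hAE
    (fun y => by simpa [add_mulVec] using hE y) i hi

end Weyl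

section EuclidNorm

variable {ι : Type*} [Fintype ι]

theorem euclidNorm_eq_norm (x : ι → ℝ) :
    euclidNorm x = ‖(WithLp.toLp 2 x : EuclideanSpace ℝ ι)‖ := by
  simp [euclidNorm, EuclideanSpace.norm_eq]

theorem euclidNorm_nonneg (x : ι → ℝ) : 0 ≤ euclidNorm x := Real.sqrt_nonneg _

theorem euclidNorm_sq (x : ι → ℝ) : euclidNorm x ^ 2 = x ⬝ᵥ x := by
  rw [euclidNorm_eq_norm, ← real_inner_self_eq_norm_sq, EuclideanSpace.inner_eq_star_dotProduct,
    star_trivial]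

theorem euclidNorm_smul (c : ℝ) (x : ι → ℝ) : euclidNorm (c • x) = |c| * euclidNorm x := by
  rw [euclidNorm_eq_norm, euclidNorm_eq_norm, WithLp.toLp_smul, norm_smul, Real.norm_eq_abs]

theorem dotProduct_le_euclidNorm_mul (x y : ι → ℝ) : x ⬝ᵥ y ≤ euclidNorm x * euclidNorm y := by
  rw [euclidNorm_eq_norm, euclidNorm_eq_norm]
  simpa [EuclideanSpace.inner_eq_star_dotProduct, dotProduct_comm] using
    real_inner_le_norm (WithLp.toLp 2 x : EuclideanSpace ℝ ι) (WithLp.toLp 2 y)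

end EuclidNorm

section SpectralNorm

variable {m n : ℕ} (A : Matrix (Fin m) (Fin n) ℝ)

theorem dotProduct_mul_transpose_mulVec_le (z : Fin m → ℝ) :
    z ⬝ᵥ ((A * Aᵀ) *ᵥ z) ≤ specNorm A ^ 2 * (z ⬝ᵥ z) := by
  have hH := isHermitian_mul_conjTranspose_self A
  have hL : specNorm A ^ 2 = ⨆ k, hH.eigenvalues k :=
    Real.sq_sqrt (Real.iSup_nonneg (eigenvalues_self_mul_conjTranspose_nonneg A))
  have hspan : WithLp.toLp 2 z ∈ Submodule.span ℝ (hH.eigenvectorBasis '' Set.univ) := by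
    rw [Set.image_univ, ← hH.eigenvectorBasis.coe_toBasis, hH.eigenvectorBasis.toBasis.span_eq]
    trivial
  rw [hL, ← conjTranspose_eq_transpose_of_trivial]
  exact dotProduct_mulVec_le_of_mem_span hH.mulVec_eigenvectorBasis
    (fun k _ => le_ciSup (Set.finite_range _).bddAbove k) hspan

theorem euclidNorm_transpose_mulVec_le (z : Fin m → ℝ) :
    euclidNorm (Aᵀ *ᵥ z) ≤ specNorm A * euclidNorm z := by
  refine (pow_le_pow_iff_left₀ (euclidNorm_nonneg _)
    (mul_nonneg (Real.sqrt_nonneg _) (euclidNorm_nonneg _)) two_ne_zero).mp ?_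
  rw [mul_pow, euclidNorm_sq, euclidNorm_sq, dotProduct_mulVec, vecMul_transpose, dotProduct_comm,
    mulVec_mulVec]
  exact dotProduct_mul_transpose_mulVec_le A z

/-- `specNorm` is defined through `A Aᵀ`, so `‖A y‖² = (Aᵀ (A y)) ⬝ y` is bounded by Cauchy–Schwarz
and the bound for `Aᵀ`. -/
theorem euclidNorm_mulVec_le (y : Fin n → ℝ) :
    euclidNorm (A *ᵥ y) ≤ specNorm A * euclidNorm y := by
  set z := A *ᵥ y
  rcases (euclidNorm_nonneg z).eq_or_lt with hz | hz
  · rw [← hz]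
    exact mul_nonneg (Real.sqrt_nonneg _) (euclidNorm_nonneg y)
  refine le_of_mul_le_mul_left ?_ hz
  calc euclidNorm z * euclidNorm z = (Aᵀ *ᵥ z) ⬝ᵥ y := by
        rw [← sq, euclidNorm_sq, mulVec_transpose, ← dotProduct_mulVec]
    _ ≤ euclidNorm (Aᵀ *ᵥ z) * euclidNorm y := dotProduct_le_euclidNorm_mul _ _
    _ ≤ specNorm A * euclidNorm z * euclidNorm y :=
        mul_le_mul_of_nonneg_right (euclidNorm_transpose_mulVec_le A z) (euclidNorm_nonneg y)
    _ = euclidNorm z * (specNorm A * euclidNorm y) := by ring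

end SpectralNorm

section BlockVectors

variable {α β : Type*} [Fintype α] [Fintype β]

theorem dotProduct_eq_comp_inl_add_comp_inr (x y : α ⊕ β → ℝ) :
    x ⬝ᵥ y = (x ∘ Sum.inl) ⬝ᵥ (y ∘ Sum.inl) + (x ∘ Sum.inr) ⬝ᵥ (y ∘ Sum.inr) := by
  rw [← sumElim_dotProduct_sumElim, Sum.elim_comp_inl_inr, Sum.elim_comp_inl_inr]

theorem euclidNorm_comp_inl_sq_add_comp_inr_sq (x : α ⊕ β → ℝ) :
    euclidNorm (x ∘ Sum.inl) ^ 2 + euclidNorm (x ∘ Sum.inr) ^ 2 = euclidNorm x ^ 2 := by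
  rw [euclidNorm_sq, euclidNorm_sq, euclidNorm_sq, ← dotProduct_eq_comp_inl_add_comp_inr]

variable [DecidableEq β]

theorem dotProduct_fromBlocks_zero_smul_one_mulVec (c : ℝ) (y : α ⊕ β → ℝ) :
    y ⬝ᵥ (fromBlocks 0 0 0 (c • 1 : Matrix β β ℝ) *ᵥ y) =
      c * ((y ∘ Sum.inr) ⬝ᵥ (y ∘ Sum.inr)) := by
  rw [dotProduct_eq_comp_inl_add_comp_inr, fromBlocks_mulVec]
  simp only [zero_mulVec, add_zero, smul_mulVec, one_mulVec, zero_add, Sum.elim_comp_inl,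
    dotProduct_zero, Sum.elim_comp_inr, dotProduct_smul, smul_eq_mul]

theorem mulVec_comp_inl_eq_of_fromBlocks_smul_one {P : Matrix α α ℝ} {Q : Matrix α β ℝ}
    {R : Matrix β α ℝ} {c l : ℝ} {x : α ⊕ β → ℝ} (h : fromBlocks P Q R (c • 1) *ᵥ x = l • x) :
    R *ᵥ (x ∘ Sum.inl) = (l - c) • (x ∘ Sum.inr) := by
  have h2 := congrArg (· ∘ Sum.inr) h
  simp only [fromBlocks_mulVec, smul_mulVec, one_mulVec, Sum.elim_comp_inr] at h2
  rw [sub_smul, eq_sub_iff_add_eq, h2]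
  rfl

theorem ithEig_mem_Icc_of_add_fromBlocks_smul_one [DecidableEq α]
    {M E : Matrix (α ⊕ β) (α ⊕ β) ℝ} (hM : M.IsHermitian) (hME : (M + E).IsHermitian) {c : ℝ} (hc : 0 ≤ c)
    (hE : E = fromBlocks 0 0 0 (c • 1)) (i : ℕ) (hi : i < Fintype.card (α ⊕ β)) :
    ithEig hME i hi ∈ Set.Icc (ithEig hM i hi) (ithEig hM i hi + c) := by
  have hquad (y : α ⊕ β → ℝ) : y ⬝ᵥ (E *ᵥ y) = c * euclidNorm (y ∘ Sum.inr) ^ 2 := by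
    rw [hE, dotProduct_fromBlocks_zero_smul_one_mulVec, euclidNorm_sq]
  refine ⟨ithEig_le_ithEig_add hM hME (fun y => by rw [hquad]; positivity) i hi,
    ithEig_add_le hM hME (fun y => ?_) i hi⟩
  rw [hquad, ← euclidNorm_sq, ← euclidNorm_comp_inl_sq_add_comp_inr_sq]
  exact mul_le_mul_of_nonneg_left (le_add_of_nonneg_left (sq_nonneg _)) hc

end BlockVectors

theorem le_div_sqrt_of_mul_le {a c u v : ℝ} (hc : 0 < c) (ha : 0 ≤ a) (hv : 0 ≤ v)
    (huv : u ^ 2 + v ^ 2 = 1) (h : c * v ≤ a * u) : v ≤ a / √(c ^ 2 + a ^ 2) := by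
  have hcv : (c * v) ^ 2 ≤ (a * u) ^ 2 := pow_le_pow_left₀ (by positivity) h 2
  rw [le_div_iff₀ (by positivity), ← pow_le_pow_iff_left₀ (by positivity) ha two_ne_zero,
    mul_pow, Real.sq_sqrt (by positivity)]
  nlinarith

theorem stmt_1 {m n : ℕ} (A : Matrix (Fin m) (Fin n) ℝ)
    (d : Fin n → ℝ)
    (δ : ℝ) (hδ : 0 < δ)
    (M E : Matrix (Fin n ⊕ Fin m) (Fin n ⊕ Fin m) ℝ)
    (hMdef : M = Matrix.fromBlocks (-(Matrix.diagonal d)⁻¹) Aᵀ A 0)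
    (hEdef : E = Matrix.fromBlocks 0 0 0 (δ • (1 : Matrix (Fin m) (Fin m) ℝ)))
    (hM : M.IsHermitian)
    (hHerm : ∀ t : ℝ, (M + t • E).IsHermitian)
    (i : ℕ) (hi : i < Fintype.card (Fin n ⊕ Fin m))
    (hbig : 2 * δ < |ithEig hM i hi|)
    (t : ℝ) (ht : t ∈ Set.Icc (0 : ℝ) 1)
    (x : Fin n ⊕ Fin m → ℝ)
    (heig : (M + t • E).mulVec x = ithEig (hHerm t) i hi • x)
    (hxnorm : euclidNorm x = 1) :
    euclidNorm (x ∘ Sum.inr) ≤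
      specNorm A / Real.sqrt ((|ithEig hM i hi| - 2 * δ) ^ 2 + specNorm A ^ 2) := by
  obtain ⟨ht0, ht1⟩ := ht
  set lam0 := ithEig hM i hi
  set lamt := ithEig (hHerm t) i hi
  have htE : t • E = fromBlocks 0 0 0 ((t * δ) • 1) := by
    rw [hEdef, fromBlocks_smul, smul_zero, smul_zero, smul_zero, smul_smul]
  obtain ⟨hlow, hup⟩ := ithEig_mem_Icc_of_add_fromBlocks_smul_one hM (hHerm t)
    (mul_nonneg ht0 hδ.le) htE i hi
  have hrow : A *ᵥ (x ∘ Sum.inl) = (lamt - t * δ) • (x ∘ Sum.inr) := by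
    refine mulVec_comp_inl_eq_of_fromBlocks_smul_one (P := -(diagonal d)⁻¹) (Q := Aᵀ) ?_
    rwa [hMdef, htE, fromBlocks_add, add_zero, add_zero, zero_add, add_zero] at heig
  have hgap : |lam0| - 2 * δ ≤ |lamt - t * δ| := by
    have hshift : |lam0 - (lamt - t * δ)| ≤ t * δ := abs_sub_le_iff.mpr ⟨by linarith, by linarith⟩
    linarith [abs_sub_abs_le_abs_sub lam0 (lamt - t * δ), mul_le_of_le_one_left hδ.le ht1]
  have hunit : euclidNorm (x ∘ Sum.inl) ^ 2 + euclidNorm (x ∘ Sum.inr) ^ 2 = 1 := by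
    rw [euclidNorm_comp_inl_sq_add_comp_inr_sq, hxnorm, one_pow]
  refine le_div_sqrt_of_mul_le (by linarith) (Real.sqrt_nonneg _) (euclidNorm_nonneg _) hunit ?_
  calc (|lam0| - 2 * δ) * euclidNorm (x ∘ Sum.inr)
      ≤ |lamt - t * δ| * euclidNorm (x ∘ Sum.inr) :=
        mul_le_mul_of_nonneg_right hgap (euclidNorm_nonneg _)
    _ = euclidNorm (A *ᵥ (x ∘ Sum.inl)) := by rw [hrow, euclidNorm_smul]
    _ ≤ specNorm A * euclidNorm (x ∘ Sum.inl) := euclidNorm_mulVec_le A _
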